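/- arXiv:1708.08255 — 4 statements merged into one kernel-verified Lean document; each statement's English description precedes it below -/
import Mathlib

section
/- For every finite connected simple graph G, the cop number of G is at least the minimum, taken over all vertices v of G, of the cardinality of a minimal siege of v. -/
/-- The m×n grid graph: vertices (i,j), adjacency when |i-i'|+|j-j'| = 1. -/
def gridGraph (m n : ℕ) : SimpleGraph (Fin m × Fin n) where
  Adj u v := Nat.dist u.1.val v.1.val + Nat.dist u.2.val v.2.val = 1
  symm := by
    constructor
    intro u v h
    simpa [Nat.dist_comm] using h
  loopless := by
    constructor
    intro u h
    simp [Nat.dist_self] at h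

/-- The semi-torus: the m×n grid with an additional toroidal closure
joining (i,0) to (i,n-1) for every row i. -/
def semiTorus (m n : ℕ) : SimpleGraph (Fin m × Fin n) :=
  SimpleGraph.fromRel (fun u v =>
    (Nat.dist u.1.val v.1.val + Nat.dist u.2.val v.2.val = 1) ∨
    (u.1 = v.1 ∧ u.2.val = 0 ∧ v.2.val = n - 1))

/-- The torus: vertices Z_m × Z_n, adjacent iff they differ by ±1 in exactly
one coordinate (mod m, resp. mod n). -/
def torusGraph (m n : ℕ) : SimpleGraph (ZMod m × ZMod n) :=
  SimpleGraph.fromRel (fun u v =>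
    (u.2 = v.2 ∧ u.1 = v.1 + 1) ∨ (u.1 = v.1 ∧ u.2 = v.2 + 1))

/-- A siege of a vertex `v`: a set `S` of vertices such that some vertex of `S`
is adjacent to `v`, and the closed neighborhoods of the vertices of `S`
cover the neighborhood of `v`. -/
def IsSiege {V : Type*} (G : SimpleGraph V) (v : V) (S : Finset V) : Prop :=
  (∃ u ∈ S, G.Adj u v) ∧ ∀ x, G.Adj v x → ∃ w ∈ S, x = w ∨ G.Adj w x

/-- The cardinality of a minimal siege of `v`. -/
noncomputable def siegeNumber {V : Type*} (G : SimpleGraph V) (v : V) : ℕ :=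
  sInf {c | ∃ S : Finset V, IsSiege G v S ∧ S.card = c}

/-- An e-loop: a chordless cycle on `e ≥ 4` vertices such that every vertex
outside the cycle is adjacent to at most one vertex of the cycle. -/
def IsELoop {V : Type*} (G : SimpleGraph V) (e : ℕ) (L : Finset V) : Prop :=
  4 ≤ e ∧ L.card = e ∧
  (∃ f : ZMod e → V,
    Function.Injective f ∧
    (∀ x, x ∈ L ↔ ∃ i, f i = x) ∧
    (∀ i j : ZMod e, G.Adj (f i) (f j) ↔ (j = i + 1 ∨ i = j + 1))) ∧
  (∀ x, x ∉ L → ∀ y ∈ L, ∀ z ∈ L, G.Adj x y → G.Adj x z → y = z)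

/-- A strategy for `k` cops on `G`: initial positions, and a move function
(depending on the round number, the current cop positions and the robber's
position) in which every cop moves to an adjacent vertex or stays still. -/
structure CopStrategy {V : Type*} (G : SimpleGraph V) (k : ℕ) where
  init : Fin k → V
  move : ℕ → (Fin k → V) → V → (Fin k → V)
  move_valid : ∀ i p r j, move i p r j = p j ∨ G.Adj (p j) (move i p r j)

/-- A strategy for the robber: an initial vertex chosen knowing the cops'
initial positions, and a move function (depending on the round number, the cop
positions after their move, and the robber's position) moving to an adjacent
vertex or staying still. -/
structure RobberStrategy {V : Type*} (G : SimpleGraph V) (k : ℕ) where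
  init : (Fin k → V) → V
  move : ℕ → (Fin k → V) → V → V
  move_valid : ∀ i p r, move i p r = r ∨ G.Adj r (move i p r)

/-- The play determined by a cop strategy and a robber strategy:
`gamePlay cs rs i` is the pair (cop positions, robber position) after round `i`. -/
def gamePlay {V : Type*} {G : SimpleGraph V} {k : ℕ}
    (cs : CopStrategy G k) (rs : RobberStrategy G k) : ℕ → (Fin k → V) × V
  | 0 => (cs.init, rs.init cs.init)
  | i + 1 =>
      let p := gamePlay cs rs i
      let c' := cs.move (i + 1) p.1 p.2
      (c', rs.move (i + 1) c' p.2)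

/-- The robber is captured within `t` rounds: at some round `i ≤ t`, some cop
occupies the robber's vertex (either right after the cops' move, or after the
robber's move). -/
def CapturedBy {V : Type*} {G : SimpleGraph V} {k : ℕ}
    (cs : CopStrategy G k) (rs : RobberStrategy G k) (t : ℕ) : Prop :=
  (∃ j, (gamePlay cs rs 0).1 j = (gamePlay cs rs 0).2) ∨
  (∃ i < t, ∃ j,
    (gamePlay cs rs (i + 1)).1 j = (gamePlay cs rs i).2 ∨
    (gamePlay cs rs (i + 1)).1 j = (gamePlay cs rs (i + 1)).2)

/-- `k` cops have a strategy capturing the robber (eventually). -/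
def CopsWin {V : Type*} (G : SimpleGraph V) (k : ℕ) : Prop :=
  ∃ cs : CopStrategy G k, ∀ rs : RobberStrategy G k, ∃ t, CapturedBy cs rs t

/-- The cop number of `G`. -/
noncomputable def copNumber {V : Type*} (G : SimpleGraph V) : ℕ :=
  sInf {k | CopsWin G k}

/-
If the cops' positions never form a siege, the robber can always stay outside the closed
neighbourhoods of all cops: after the cops move, either some neighbour of the robber is still
outside every closed neighbourhood and he steps there, or all his neighbours are covered, and then
no cop can be adjacent to him, since otherwise the cops' positions would besiege him. A safe start
exists for the same reason: if every vertex were dominated, any neighbour of a cop would be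
besieged. So if every vertex has siege number larger than `k`, the robber evades `k` cops forever.
-/

namespace SimpleGraph

variable {V : Type*} {G : SimpleGraph V} {k : ℕ}

theorem siegeNumber_le_card {v : V} {S : Finset V} (hS : IsSiege G v S) :
    siegeNumber G v ≤ S.card :=
  Nat.sInf_le ⟨S, hS, rfl⟩

theorem exists_adj_of_siegeNumber_pos {v : V} (hv : 0 < siegeNumber G v) : ∃ u, G.Adj v u := by
  obtain ⟨_, S, ⟨⟨u, -, hu⟩, -⟩, -⟩ := Nat.nonempty_of_pos_sInf hv
  exact ⟨u, hu.symm⟩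

def IsSafe (G : SimpleGraph V) (p : Fin k → V) (r : V) : Prop :=
  ∀ j, p j ≠ r ∧ ¬ G.Adj (p j) r

theorem IsSafe.ne_of_move {p p' : Fin k → V} {r : V} (hr : G.IsSafe p r)
    (hmove : ∀ j, p' j = p j ∨ G.Adj (p j) (p' j)) (j : Fin k) : p' j ≠ r := by
  rintro rfl
  rcases hmove j with h | h
  · exact (hr j).1 h.symm
  · exact (hr j).2 h

theorem isSiege_image_of_not_isSafe [DecidableEq V] {p : Fin k → V} {v : V}
    (hadj : ∃ j, G.Adj (p j) v) (hcover : ∀ x, G.Adj v x → ¬ G.IsSafe p x) :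
    IsSiege G v (Finset.univ.image p) := by
  refine ⟨?_, fun x hx => ?_⟩
  · obtain ⟨j, hj⟩ := hadj
    exact ⟨p j, Finset.mem_image_of_mem _ (Finset.mem_univ j), hj⟩
  · obtain ⟨j, hj⟩ : ∃ j, p j = x ∨ G.Adj (p j) x := by
      simpa [IsSafe, imp_iff_not_or] using hcover x hx
    exact ⟨p j, Finset.mem_image_of_mem _ (Finset.mem_univ j), hj.imp_left Eq.symm⟩

theorem not_isSiege_image [DecidableEq V] (hk : ∀ v, k < siegeNumber G v) (p : Fin k → V)
    (v : V) : ¬ IsSiege G v (Finset.univ.image p) := fun hS =>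
  ((hk v).trans_le (siegeNumber_le_card hS)).not_ge (Finset.card_image_le.trans (by simp))

theorem exists_isSafe [Nonempty V] (hk : ∀ v, k < siegeNumber G v) (p : Fin k → V) :
    ∃ r, G.IsSafe p r := by
  classical
  by_contra! hnone
  obtain ⟨v⟩ := ‹Nonempty V›
  obtain ⟨j, -⟩ : ∃ j, p j = v ∨ G.Adj (p j) v := by
    simpa [IsSafe, imp_iff_not_or] using hnone v
  obtain ⟨u, hu⟩ := exists_adj_of_siegeNumber_pos ((Nat.zero_le k).trans_lt (hk (p j)))
  exact not_isSiege_image hk p u (isSiege_image_of_not_isSafe ⟨j, hu⟩ fun x _ => hnone x)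

noncomputable def escape (G : SimpleGraph V) (p : Fin k → V) (r : V) : V :=
  haveI := Classical.propDecidable
  if h : ∃ x, G.Adj r x ∧ G.IsSafe p x then h.choose else r

theorem escape_eq_or_adj (p : Fin k → V) (r : V) :
    G.escape p r = r ∨ G.Adj r (G.escape p r) := by
  unfold escape
  split_ifs with h
  exacts [Or.inr h.choose_spec.1, Or.inl rfl]

theorem IsSafe.isSafe_escape (hk : ∀ v, k < siegeNumber G v) {p p' : Fin k → V} {r : V}
    (hr : G.IsSafe p r) (hmove : ∀ j, p' j = p j ∨ G.Adj (p j) (p' j)) :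
    G.IsSafe p' (G.escape p' r) := by
  classical
  unfold escape
  split_ifs with h
  · exact h.choose_spec.2
  · push Not at h
    refine fun j => ⟨hr.ne_of_move hmove j, fun hadj => ?_⟩
    exact not_isSiege_image hk p' r (isSiege_image_of_not_isSafe ⟨j, hadj⟩ h)

noncomputable def evasionStrategy [Nonempty V] (hk : ∀ v, k < siegeNumber G v) :
    RobberStrategy G k where
  init p := (exists_isSafe hk p).choose
  move _ p r := G.escape p r
  move_valid _ := escape_eq_or_adj

theorem isSafe_gamePlay_evasionStrategy [Nonempty V] (hk : ∀ v, k < siegeNumber G v)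
    (cs : CopStrategy G k) (i : ℕ) :
    G.IsSafe (gamePlay cs (evasionStrategy hk) i).1 (gamePlay cs (evasionStrategy hk) i).2 := by
  induction i with
  | zero => exact (exists_isSafe hk cs.init).choose_spec
  | succ i ih => exact ih.isSafe_escape hk (cs.move_valid _ _ _)

theorem not_capturedBy_evasionStrategy [Nonempty V] (hk : ∀ v, k < siegeNumber G v)
    (cs : CopStrategy G k) (t : ℕ) : ¬ CapturedBy cs (evasionStrategy hk) t := by
  have hsafe := isSafe_gamePlay_evasionStrategy hk cs
  rintro (⟨j, hj⟩ | ⟨i, -, j, hj | hj⟩)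
  · exact (hsafe 0 j).1 hj
  · exact (hsafe i).ne_of_move (cs.move_valid _ _ _) j hj
  · exact (hsafe (i + 1) j).1 hj

end SimpleGraph

theorem CopsWin.exists_siegeNumber_le {V : Type*} [Nonempty V] {G : SimpleGraph V} {k : ℕ}
    (h : CopsWin G k) : ∃ v, siegeNumber G v ≤ k := by
  by_contra! hk
  obtain ⟨cs, hcs⟩ := h
  obtain ⟨t, ht⟩ := hcs (SimpleGraph.evasionStrategy hk)
  exact SimpleGraph.not_capturedBy_evasionStrategy hk cs t ht

theorem copsWin_card {V : Type*} [Fintype V] (G : SimpleGraph V) : CopsWin G (Fintype.card V) := by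
  refine ⟨⟨⇑(Fintype.equivFin V).symm, fun _ p _ => p, fun _ _ _ _ => Or.inl rfl⟩,
    fun rs => ⟨0, Or.inl ⟨Fintype.equivFin V (rs.init ⇑(Fintype.equivFin V).symm), ?_⟩⟩⟩
  simp [gamePlay]

theorem stmt_1_general {V : Type*} [Fintype V] (G : SimpleGraph V) :
    sInf (Set.range fun v => siegeNumber G v) ≤ copNumber G := by
  rcases isEmpty_or_nonempty V with _ | _
  · simp [Set.range_eq_empty]
  have hwin : CopsWin G (copNumber G) :=
    Nat.sInf_mem (s := {k | CopsWin G k}) ⟨_, copsWin_card G⟩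
  obtain ⟨v, hv⟩ := hwin.exists_siegeNumber_le
  exact (Nat.sInf_le (Set.mem_range_self v)).trans hv

/-- The cop number of a finite connected simple graph is at least the
minimum, over all vertices `v`, of the cardinality of a minimal siege of `v`. -/
theorem stmt_1 {V : Type*} [Fintype V] (G : SimpleGraph V) (hG : G.Connected) :
    sInf (Set.range fun v => siegeNumber G v) ≤ copNumber G :=
  stmt_1_general G
end

section
/- In the cops and robber game on the grid G_{m,n} with m,n ≥ 2 played with two cops, for every strategy of the two cops the robber can force the capture time to be at least ⌊(m+n)/2⌋ − 1. -/
/-!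
The robber picks the corner `q` of the grid whose total distance from the two cops' starting
vertices is largest; since opposite corners are at total distance `m + n - 2` from any vertex,
this total is at least `m + n - 2`. He then stays in the `2 × 2` block at `q`, at distance at
least `2` from both cops. Folding the grid at `q` is an isometry onto a box of `ℕ × ℕ`, and in
the unit square of `ℕ × ℕ` a robber can always keep such a position, by staying or by crossing
one side of the square, as long as the cops are at total distance at least `4` from the origin.
The cops lose at most `2` from that total per round, so the robber is safe through round `i`
whenever `2 i + 6 ≤ m + n`; at all times he can also avoid stepping onto a cop, since a vertex
and two of its neighbours are three vertices.
-/

namespace GridCopsRobber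

def taxicab (a b : ℕ × ℕ) : ℕ := Nat.dist a.1 b.1 + Nat.dist a.2 b.2

def unitSquare : Set (ℕ × ℕ) := {w | w.1 ≤ 1 ∧ w.2 ≤ 1}

theorem exists_escape_unitSquare {p c₁ c₂ : ℕ × ℕ} (hp : p ∈ unitSquare) (h₁ : c₁ ≠ p)
    (h₂ : c₂ ≠ p) (hfar : 4 ≤ c₁.1 + c₁.2 + (c₂.1 + c₂.2)) :
    ∃ w ∈ unitSquare, taxicab p w ≤ 1 ∧ 2 ≤ taxicab c₁ w ∧ 2 ≤ taxicab c₂ w := by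
  obtain ⟨a, b⟩ := p
  obtain ⟨x₁, y₁⟩ := c₁
  obtain ⟨x₂, y₂⟩ := c₂
  obtain ⟨ha, hb⟩ : a ≤ 1 ∧ b ≤ 1 := hp
  simp only [ne_eq, Prod.mk.injEq] at h₁ h₂ hfar
  by_cases hstay : 2 ≤ taxicab (x₁, y₁) (a, b) ∧ 2 ≤ taxicab (x₂, y₂) (a, b)
  · exact ⟨(a, b), ⟨ha, hb⟩, by simp [taxicab], hstay⟩
  by_cases hcross : 2 ≤ taxicab (x₁, y₁) (1 - a, b) ∧ 2 ≤ taxicab (x₂, y₂) (1 - a, b)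
  · exact ⟨(1 - a, b), ⟨by omega, hb⟩, by simp only [taxicab, Nat.dist]; omega, hcross⟩
  refine ⟨(a, 1 - b), ⟨ha, by omega⟩, by simp only [taxicab, Nat.dist]; omega, ?_⟩
  simp only [taxicab, Nat.dist] at hstay hcross ⊢
  interval_cases a <;> interval_cases b <;> omega

theorem exists_far_unitSquare {c₁ c₂ : ℕ × ℕ} (hfar : 4 ≤ c₁.1 + c₁.2 + (c₂.1 + c₂.2)) :
    ∃ w ∈ unitSquare, 2 ≤ taxicab c₁ w ∧ 2 ≤ taxicab c₂ w := by
  obtain ⟨p, hp, h₁, h₂⟩ : ∃ p ∈ unitSquare, c₁ ≠ p ∧ c₂ ≠ p := by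
    by_cases h : c₁ = (0, 0) ∨ c₂ = (0, 0)
    · refine ⟨(1, 1), ⟨le_rfl, le_rfl⟩, ?_, ?_⟩ <;> rintro rfl <;>
        rcases h with h | h <;> simp_all
    · push Not at h
      exact ⟨(0, 0), ⟨zero_le_one, zero_le_one⟩, h⟩
  obtain ⟨w, hw, -, hfar⟩ := exists_escape_unitSquare hp h₁ h₂ hfar
  exact ⟨w, hw, hfar⟩

theorem dist_eq_dist_dist_endpoint {M a b e : ℕ} (he : e = 0 ∨ e = M - 1) (ha : a < M)
    (hb : b < M) : Nat.dist a b = Nat.dist (Nat.dist a e) (Nat.dist b e) := by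
  rcases he with rfl | rfl <;> simp only [Nat.dist] <;> omega

theorem exists_dist_endpoint_eq {M e k : ℕ} (he : e = 0 ∨ e = M - 1) (hk : k < M) :
    ∃ a < M, Nat.dist a e = k := by
  rcases he with rfl | rfl
  · exact ⟨k, hk, by simp only [Nat.dist]; omega⟩
  · exact ⟨M - 1 - k, by omega, by simp only [Nat.dist]; omega⟩

theorem exists_dist_eq_one {M : ℕ} (hM : 2 ≤ M) (a : Fin M) : ∃ b : Fin M, Nat.dist a b = 1 := by
  by_cases ha : a.val = 0
  · exact ⟨⟨1, hM⟩, by simp only [Nat.dist]; omega⟩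
  · exact ⟨⟨a - 1, by omega⟩, by simp only [Nat.dist]; omega⟩

variable {m n : ℕ}

def gridDist (u v : Fin m × Fin n) : ℕ := Nat.dist u.1 v.1 + Nat.dist u.2 v.2

theorem gridDist_triangle (u v w : Fin m × Fin n) : gridDist u w ≤ gridDist u v + gridDist v w := by
  simp only [gridDist, Nat.dist]; omega

theorem gridDist_eq_zero {u v : Fin m × Fin n} : gridDist u v = 0 ↔ u = v := by
  simp only [gridDist, Nat.dist, Prod.ext_iff, Fin.ext_iff]; omega

theorem gridGraph_adj_iff {u v : Fin m × Fin n} : (gridGraph m n).Adj u v ↔ gridDist u v = 1 :=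
  Iff.rfl

theorem gridDist_le_one_iff {u v : Fin m × Fin n} :
    gridDist u v ≤ 1 ↔ u = v ∨ (gridGraph m n).Adj u v := by
  rw [← gridDist_eq_zero, gridGraph_adj_iff, Nat.le_one_iff_eq_zero_or_eq_one]

theorem ne_of_gridDist_pos {u v : Fin m × Fin n} (h : 0 < gridDist u v) : u ≠ v :=
  fun huv => h.ne' (gridDist_eq_zero.2 huv)

def IsCorner (q : Fin m × Fin n) : Prop :=
  (q.1.val = 0 ∨ q.1.val = m - 1) ∧ (q.2.val = 0 ∨ q.2.val = n - 1)

theorem exists_isCorner_le_gridDist_add (c₁ c₂ : Fin m × Fin n) :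
    ∃ q, IsCorner q ∧ m + n - 2 ≤ gridDist c₁ q + gridDist c₂ q := by
  have := c₁.1.isLt; have := c₁.2.isLt
  let q₀ : Fin m × Fin n := (⟨0, by omega⟩, ⟨0, by omega⟩)
  let q₁ : Fin m × Fin n := (⟨m - 1, by omega⟩, ⟨n - 1, by omega⟩)
  have hsum (c : Fin m × Fin n) : gridDist c q₀ + gridDist c q₁ = m + n - 2 := by
    have := c.1.isLt; have := c.2.isLt
    simp only [gridDist, Nat.dist, q₀, q₁]
    omega
  by_cases h : m + n - 2 ≤ gridDist c₁ q₀ + gridDist c₂ q₀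
  · exact ⟨q₀, ⟨Or.inl rfl, Or.inl rfl⟩, h⟩
  · exact ⟨q₁, ⟨Or.inr rfl, Or.inr rfl⟩, by have := hsum c₁; have := hsum c₂; omega⟩

def foldAt (q u : Fin m × Fin n) : ℕ × ℕ := (Nat.dist u.1 q.1, Nat.dist u.2 q.2)

theorem gridDist_eq_taxicab_foldAt {q : Fin m × Fin n} (hq : IsCorner q) (u v : Fin m × Fin n) :
    gridDist u v = taxicab (foldAt q u) (foldAt q v) := by
  simp only [gridDist, taxicab, foldAt]
  rw [dist_eq_dist_dist_endpoint hq.1 u.1.isLt v.1.isLt,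
    dist_eq_dist_dist_endpoint hq.2 u.2.isLt v.2.isLt]

theorem foldAt_injective {q : Fin m × Fin n} (hq : IsCorner q) : Function.Injective (foldAt q) :=
  fun u v h => gridDist_eq_zero.1 <| by
    simp [gridDist_eq_taxicab_foldAt hq, h, taxicab]

theorem exists_foldAt_eq {q : Fin m × Fin n} (hq : IsCorner q) {w : ℕ × ℕ} (h₁ : w.1 < m)
    (h₂ : w.2 < n) : ∃ u, foldAt q u = w := by
  obtain ⟨a, ha, hae⟩ := exists_dist_endpoint_eq hq.1 h₁
  obtain ⟨b, hb, hbe⟩ := exists_dist_endpoint_eq hq.2 h₂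
  exact ⟨(⟨a, ha⟩, ⟨b, hb⟩), Prod.ext hae hbe⟩

def cornerBlock (q : Fin m × Fin n) : Set (Fin m × Fin n) := foldAt q ⁻¹' unitSquare

def IsSafe {k : ℕ} (q : Fin m × Fin n) (cops : Fin k → Fin m × Fin n) (w : Fin m × Fin n) : Prop :=
  w ∈ cornerBlock q ∧ ∀ j, 2 ≤ gridDist (cops j) w

theorem exists_isSafe_move (hm : 2 ≤ m) (hn : 2 ≤ n) {q p : Fin m × Fin n} (hq : IsCorner q)
    (hp : p ∈ cornerBlock q) {cops : Fin 2 → Fin m × Fin n} (hcops : ∀ j, cops j ≠ p)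
    (hfar : 4 ≤ gridDist (cops 0) q + gridDist (cops 1) q) :
    ∃ w, gridDist p w ≤ 1 ∧ IsSafe q cops w := by
  obtain ⟨w, hw, hpw, h₀, h₁⟩ := exists_escape_unitSquare hp
    ((foldAt_injective hq).ne (hcops 0)) ((foldAt_injective hq).ne (hcops 1)) hfar
  obtain ⟨u, rfl⟩ := exists_foldAt_eq hq (w := w) (by have := hw.1; omega) (by have := hw.2; omega)
  simp only [← gridDist_eq_taxicab_foldAt hq] at hpw h₀ h₁
  exact ⟨u, hpw, hw, Fin.forall_fin_two.2 ⟨h₀, h₁⟩⟩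

theorem exists_isSafe (hm : 2 ≤ m) (hn : 2 ≤ n) {q : Fin m × Fin n} (hq : IsCorner q)
    {cops : Fin 2 → Fin m × Fin n} (hfar : 4 ≤ gridDist (cops 0) q + gridDist (cops 1) q) :
    ∃ w, IsSafe q cops w := by
  obtain ⟨w, hw, h₀, h₁⟩ :=
    exists_far_unitSquare (c₁ := foldAt q (cops 0)) (c₂ := foldAt q (cops 1)) hfar
  obtain ⟨u, rfl⟩ := exists_foldAt_eq hq (w := w) (by have := hw.1; omega) (by have := hw.2; omega)
  simp only [← gridDist_eq_taxicab_foldAt hq] at h₀ h₁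
  exact ⟨u, hw, Fin.forall_fin_two.2 ⟨h₀, h₁⟩⟩

theorem exists_move_avoiding (hm : 2 ≤ m) (hn : 2 ≤ n) (p : Fin m × Fin n)
    (cops : Fin 2 → Fin m × Fin n) : ∃ w, gridDist p w ≤ 1 ∧ ∀ j, cops j ≠ w := by
  obtain ⟨a, ha⟩ := exists_dist_eq_one hm p.1
  obtain ⟨b, hb⟩ := exists_dist_eq_one hn p.2
  have hpa : p ≠ (a, p.2) := fun h => by
    simp only [Prod.ext_iff, and_true] at h
    simp [← h, Nat.dist_self] at ha
  have hpb : p ≠ (p.1, b) := fun h => by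
    simp only [Prod.ext_iff, true_and] at h
    simp [← h, Nat.dist_self] at hb
  have hab : (a, p.2) ≠ (p.1, b) := fun h => hpb (by simp_all [Prod.ext_iff])
  by_contra! h
  have h₁ := h p (by simp [gridDist, Nat.dist_self])
  have h₂ := h (a, p.2) (by simp [gridDist, ha, Nat.dist_self])
  have h₃ := h (p.1, b) (by simp [gridDist, hb, Nat.dist_self])
  simp only [Fin.exists_fin_two] at h₁ h₂ h₃
  grind

section GridPlay

variable {k : ℕ} (cs : CopStrategy (gridGraph m n) k) (rs : RobberStrategy (gridGraph m n) k)

theorem gridDist_gamePlay_succ_le (i : ℕ) (j : Fin k) :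
    gridDist ((gamePlay cs rs i).1 j) ((gamePlay cs rs (i + 1)).1 j) ≤ 1 :=
  gridDist_le_one_iff.2 ((cs.move_valid (i + 1) _ _ j).imp Eq.symm id)

theorem gridDist_init_gamePlay_le (j : Fin k) (i : ℕ) :
    gridDist (cs.init j) ((gamePlay cs rs i).1 j) ≤ i := by
  induction i with
  | zero => simp [gamePlay, gridDist_eq_zero]
  | succ i ih =>
    have := gridDist_triangle (cs.init j) ((gamePlay cs rs i).1 j) ((gamePlay cs rs (i + 1)).1 j)
    have := gridDist_gamePlay_succ_le cs rs i j
    omega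

theorem gamePlay_succ_cop_ne_of_two_le_gridDist {i : ℕ} {j : Fin k}
    (h : 2 ≤ gridDist ((gamePlay cs rs i).1 j) (gamePlay cs rs i).2) :
    (gamePlay cs rs (i + 1)).1 j ≠ (gamePlay cs rs i).2 := by
  have := gridDist_triangle ((gamePlay cs rs i).1 j) ((gamePlay cs rs (i + 1)).1 j)
    (gamePlay cs rs i).2
  have := gridDist_gamePlay_succ_le cs rs i j
  exact ne_of_gridDist_pos (by omega)

end GridPlay

section Prefer

variable {V : Type*} (P Q : V → Prop) (d : V)

open Classical in
noncomputable def prefer : V :=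
  if h : ∃ v, P v then h.choose else if h' : ∃ v, Q v then h'.choose else d

variable {P Q d}

theorem prefer_spec (R : V → Prop) (hP : ∀ v, P v → R v) (hQ : ∀ v, Q v → R v) (hd : R d) :
    R (prefer P Q d) := by
  unfold prefer
  split_ifs with h h'
  exacts [hP _ h.choose_spec, hQ _ h'.choose_spec, hd]

theorem prefer_of_exists_left (h : ∃ v, P v) : P (prefer P Q d) := by
  unfold prefer
  rw [dif_pos h]
  exact h.choose_spec

theorem prefer_of_exists_right (hPQ : ∀ v, P v → Q v) (h : ∃ v, Q v) : Q (prefer P Q d) := by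
  unfold prefer
  split_ifs with hP
  exacts [hPQ _ hP.choose_spec, h.choose_spec]

end Prefer

theorem IsSafe.ne {k : ℕ} {q w : Fin m × Fin n} {cops : Fin k → Fin m × Fin n}
    (h : IsSafe q cops w) (j : Fin k) : cops j ≠ w :=
  ne_of_gridDist_pos ((h.2 j).trans_lt' two_pos)

noncomputable def robberStart (q : Fin m × Fin n) (cops : Fin 2 → Fin m × Fin n) : Fin m × Fin n :=
  prefer (IsSafe q cops) (fun w => ∀ j, cops j ≠ w) q

noncomputable def robberStep (q : Fin m × Fin n) (cops : Fin 2 → Fin m × Fin n)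
    (p : Fin m × Fin n) : Fin m × Fin n :=
  prefer (fun w => gridDist p w ≤ 1 ∧ IsSafe q cops w)
    (fun w => gridDist p w ≤ 1 ∧ ∀ j, cops j ≠ w) p

theorem gridDist_robberStep_le (q : Fin m × Fin n) (cops : Fin 2 → Fin m × Fin n)
    (p : Fin m × Fin n) : gridDist p (robberStep q cops p) ≤ 1 :=
  prefer_spec (gridDist p · ≤ 1) (fun _ h => h.1) (fun _ h => h.1)
    ((gridDist_eq_zero.2 rfl).trans_le zero_le_one)

noncomputable def cornerRobber (q : Fin m × Fin n) : RobberStrategy (gridGraph m n) 2 where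
  init := robberStart q
  move _ := robberStep q
  move_valid _ cops p := (gridDist_le_one_iff.1 (gridDist_robberStep_le q cops p)).imp_left Eq.symm

theorem robberStart_isSafe {q : Fin m × Fin n} {cops : Fin 2 → Fin m × Fin n}
    (h : ∃ w, IsSafe q cops w) : IsSafe q cops (robberStart q cops) :=
  prefer_of_exists_left h

theorem robberStep_isSafe {q p : Fin m × Fin n} {cops : Fin 2 → Fin m × Fin n}
    (h : ∃ w, gridDist p w ≤ 1 ∧ IsSafe q cops w) : IsSafe q cops (robberStep q cops p) :=
  (prefer_of_exists_left h).2

variable (hm : 2 ≤ m) (hn : 2 ≤ n) (q : Fin m × Fin n)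
include hm hn

theorem robberStart_ne (cops : Fin 2 → Fin m × Fin n) : ∀ j, cops j ≠ robberStart q cops := by
  obtain ⟨w, -, hw⟩ := exists_move_avoiding hm hn q cops
  exact prefer_of_exists_right (Q := fun w => ∀ j, cops j ≠ w) (fun _ h => h.ne) ⟨w, hw⟩

theorem robberStep_ne (cops : Fin 2 → Fin m × Fin n) (p : Fin m × Fin n) :
    ∀ j, cops j ≠ robberStep q cops p :=
  (prefer_of_exists_right (fun _ h => ⟨h.1, h.2.ne⟩) (exists_move_avoiding hm hn p cops)).2

theorem gamePlay_cop_ne_cornerRobber (cs : CopStrategy (gridGraph m n) 2) (i : ℕ) (j : Fin 2) :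
    (gamePlay cs (cornerRobber q) i).1 j ≠ (gamePlay cs (cornerRobber q) i).2 := by
  cases i with
  | zero => exact robberStart_ne hm hn q _ j
  | succ i => exact robberStep_ne hm hn q _ _ j

-- As long as `2 i + 6 ≤ m + n`, the cops, having moved at most `i` steps each, are still
-- at total distance at least `4` from the corner.
theorem isSafe_gamePlay_cornerRobber (hq : IsCorner q) (cs : CopStrategy (gridGraph m n) 2)
    (hfar : m + n - 2 ≤ gridDist (cs.init 0) q + gridDist (cs.init 1) q) (i : ℕ)
    (hi : 2 * i + 6 ≤ m + n) :
    IsSafe q (gamePlay cs (cornerRobber q) i).1 (gamePlay cs (cornerRobber q) i).2 := by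
  induction i with
  | zero => exact robberStart_isSafe (exists_isSafe hm hn hq (cops := cs.init) (by omega))
  | succ i ih =>
    have hsafe := ih (by omega)
    have hfar' (j : Fin 2) := gridDist_triangle (cs.init j)
      ((gamePlay cs (cornerRobber q) (i + 1)).1 j) q
    have hmoved (j : Fin 2) := gridDist_init_gamePlay_le cs (cornerRobber q) j (i + 1)
    refine robberStep_isSafe (exists_isSafe_move hm hn hq hsafe.1 (fun j => ?_) ?_)
    · exact gamePlay_succ_cop_ne_of_two_le_gridDist cs _ (hsafe.2 j)
    · have := hfar' 0; have := hfar' 1; have := hmoved 0; have := hmoved 1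
      omega

end GridCopsRobber

open GridCopsRobber

/-- On the grid G_{m,n} with m,n ≥ 2, against every strategy of two cops
the robber can force the capture time to be at least ⌊(m+n)/2⌋ - 1. -/
theorem stmt_8 (m n : ℕ) (hm : 2 ≤ m) (hn : 2 ≤ n)
    (cs : CopStrategy (gridGraph m n) 2) :
    ∃ rs : RobberStrategy (gridGraph m n) 2,
      ∀ t : ℕ, CapturedBy cs rs t → (m + n) / 2 - 1 ≤ t := by
  obtain ⟨q, hq, hfar⟩ := exists_isCorner_le_gridDist_add (cs.init 0) (cs.init 1)
  refine ⟨cornerRobber q, fun t hcap => ?_⟩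
  have hfree := gamePlay_cop_ne_cornerRobber hm hn q cs
  rcases hcap with ⟨j, hj⟩ | ⟨i, hit, j, hj | hj⟩
  · exact absurd hj (hfree 0 j)
  · by_contra! ht
    have hsafe := isSafe_gamePlay_cornerRobber hm hn q hq cs hfar i (by omega)
    exact gamePlay_succ_cop_ne_of_two_le_gridDist cs _ (hsafe.2 j) hj
  · exact absurd hj (hfree (i + 1) j)
end

section
/- In the cops and robber game on the semi-torus S_{m,n} with m ≥ 3 and n ≥ 4 played with two cops, for every strategy of the two cops the robber can force the capture time to be at least ⌊n/2⌋ + ⌊m/2⌋ − 2. -/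
/-!
The robber picks a 4-cycle `{x, x'} × {c, c'}` of the semi-torus whose taxicab distance (row
distance plus cyclic column distance) from the first cop is at least `(⌊m/2⌋ - 1) + (⌊n/2⌋ - 1)`,
and starts on a corner not within distance one of the second cop. Every edge changes only one
coordinate, so a cop adjacent to a corner is within distance one of at most one of the two
neighbouring corners: moving along the cycle, the robber stays at distance at least two from the
second cop forever. The taxicab distance drops by at most one per edge, so the first cop needs at
least that many rounds to reach the cycle.
-/

namespace SimpleGraph

variable {V : Type*} (G : SimpleGraph V)

def IsEvasionSet (L : Set V) : Prop :=
  ∀ r ∈ L, ∀ a, G.Adj a r → ∃ w ∈ L, G.Adj r w ∧ 1 < G.edist a w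

variable {G}

lemma Walk.apply_le_apply_add_length {f : V → ℕ} (hf : ∀ ⦃u v⦄, G.Adj u v → f v ≤ f u + 1)
    {u v : V} (p : G.Walk u v) : f v ≤ f u + p.length := by
  induction p with
  | nil => simp
  | cons h _ ih =>
    rw [Walk.length_cons]
    have := hf h
    omega

lemma apply_le_apply_add_edist {f : V → ℕ} (hf : ∀ ⦃u v⦄, G.Adj u v → f v ≤ f u + 1)
    (u v : V) : (f v : ℕ∞) ≤ f u + G.edist u v := by
  by_cases h : G.edist u v = ⊤
  · simp [h]
  · obtain ⟨p, hp⟩ := exists_walk_of_edist_ne_top h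
    rw [← hp]
    exact_mod_cast p.apply_le_apply_add_length hf

end SimpleGraph

open SimpleGraph

section Game

variable {V : Type*} {G : SimpleGraph V} {k : ℕ}

lemma gamePlay_succ_fst (cs : CopStrategy G k) (rs : RobberStrategy G k) (i : ℕ) :
    (gamePlay cs rs (i + 1)).1 = cs.move (i + 1) (gamePlay cs rs i).1 (gamePlay cs rs i).2 :=
  rfl

lemma gamePlay_succ_snd (cs : CopStrategy G k) (rs : RobberStrategy G k) (i : ℕ) :
    (gamePlay cs rs (i + 1)).2 = rs.move (i + 1) (gamePlay cs rs (i + 1)).1 (gamePlay cs rs i).2 :=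
  rfl

lemma edist_gamePlay_succ_le (cs : CopStrategy G k) (rs : RobberStrategy G k) (i : ℕ)
    (j : Fin k) : G.edist ((gamePlay cs rs i).1 j) ((gamePlay cs rs (i + 1)).1 j) ≤ 1 := by
  rw [gamePlay_succ_fst, edist_le_one_iff_adj_or_eq]
  exact (cs.move_valid _ _ _ j).symm.imp_right Eq.symm

lemma edist_init_gamePlay_le (cs : CopStrategy G k) (rs : RobberStrategy G k) (i : ℕ)
    (j : Fin k) : G.edist (cs.init j) ((gamePlay cs rs i).1 j) ≤ i := by
  induction i with
  | zero => simp [gamePlay]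
  | succ i ih =>
    calc G.edist (cs.init j) ((gamePlay cs rs (i + 1)).1 j)
        ≤ G.edist (cs.init j) ((gamePlay cs rs i).1 j)
          + G.edist ((gamePlay cs rs i).1 j) ((gamePlay cs rs (i + 1)).1 j) := G.edist_triangle
      _ ≤ i + 1 := add_le_add ih (edist_gamePlay_succ_le cs rs i j)
      _ = (i + 1 : ℕ) := by push_cast; rfl

open Classical in
noncomputable def evasionMove (G : SimpleGraph V) (L : Set V) (a r : V) : V :=
  if h : ∃ w ∈ L, G.Adj r w ∧ 1 < G.edist a w then h.choose else r

lemma evasionMove_eq_or_adj (L : Set V) (a r : V) :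
    evasionMove G L a r = r ∨ G.Adj r (evasionMove G L a r) := by
  unfold evasionMove
  split_ifs with h
  · exact Or.inr h.choose_spec.2.1
  · exact Or.inl rfl

lemma evasionMove_spec {L : Set V} (hL : G.IsEvasionSet L) {a r : V} (hr : r ∈ L)
    (ha : a ≠ r) : evasionMove G L a r ∈ L ∧ 1 < G.edist a (evasionMove G L a r) := by
  unfold evasionMove
  split_ifs with h
  · exact ⟨h.choose_spec.1, h.choose_spec.2.2⟩
  · refine ⟨hr, ?_⟩
    rw [← not_le, edist_le_one_iff_adj_or_eq]
    rintro (hadj | rfl)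
    · exact h (hL r hr a hadj)
    · exact ha rfl

noncomputable def evasionStrategy (G : SimpleGraph V) (L : Set V) (j : Fin k) (r₀ : V) :
    RobberStrategy G k where
  init _ := r₀
  move _ c r := evasionMove G L (c j) r
  move_valid _ c r := evasionMove_eq_or_adj L (c j) r

variable {cs : CopStrategy G k} {L : Set V} {j : Fin k} {r₀ : V}

lemma gamePlay_evasionStrategy (hL : G.IsEvasionSet L) (hr₀ : r₀ ∈ L)
    (h₀ : 1 < G.edist (cs.init j) r₀) (i : ℕ) :
    (gamePlay cs (evasionStrategy G L j r₀) i).2 ∈ L ∧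
      1 < G.edist ((gamePlay cs (evasionStrategy G L j r₀) i).1 j)
        (gamePlay cs (evasionStrategy G L j r₀) i).2 := by
  induction i with
  | zero => exact ⟨hr₀, h₀⟩
  | succ i ih =>
    have hne : (gamePlay cs (evasionStrategy G L j r₀) (i + 1)).1 j ≠
        (gamePlay cs (evasionStrategy G L j r₀) i).2 := by
      intro h
      have := edist_gamePlay_succ_le cs (evasionStrategy G L j r₀) i j
      rw [h] at this
      exact absurd ih.2 (not_lt.2 this)
    rw [gamePlay_succ_snd]
    exact evasionMove_spec hL ih.1 hne

theorem CapturedBy.le_of_evasionStrategy {T t : ℕ} (hL : G.IsEvasionSet L) (hr₀ : r₀ ∈ L)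
    (h₀ : 1 < G.edist (cs.init j) r₀)
    (hfar : ∀ j' ≠ j, ∀ v ∈ L, (T : ℕ∞) ≤ G.edist (cs.init j') v)
    (hcap : CapturedBy cs (evasionStrategy G L j r₀) t) : T ≤ t := by
  set P := gamePlay cs (evasionStrategy G L j r₀)
  have hsafe := gamePlay_evasionStrategy hL hr₀ h₀
  have hcaught : ∀ i i' j', i ≤ t → (i' = i ∨ i' + 1 = i) → (P i).1 j' = (P i').2 → T ≤ t := by
    rintro i i' j' hit hi' hcop
    by_cases hj : j' = j
    · subst hj
      exfalso
      rcases hi' with rfl | rfl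
      · simpa [P, hcop] using (hsafe i').2
      · have := edist_gamePlay_succ_le cs (evasionStrategy G L j' r₀) i' j'
        rw [hcop] at this
        exact absurd (hsafe i').2 (not_lt.2 this)
    · have hle := edist_init_gamePlay_le cs (evasionStrategy G L j r₀) i j'
      rw [hcop] at hle
      have : (T : ℕ∞) ≤ t := (hfar j' hj _ (hsafe i').1).trans (hle.trans (by exact_mod_cast hit))
      exact_mod_cast this
  rcases hcap with ⟨j', h⟩ | ⟨i, hi, j', h | h⟩
  · exact hcaught 0 0 j' (Nat.zero_le t) (Or.inl rfl) h
  · exact hcaught (i + 1) i j' hi (Or.inr rfl) h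
  · exact hcaught (i + 1) (i + 1) j' hi (Or.inl rfl) h

end Game

section Square

variable {α β : Type*} {G : SimpleGraph (α × β)}

lemma one_lt_edist_of_ne_of_ne (hG : ∀ ⦃u v⦄, G.Adj u v → u.1 = v.1 ∨ u.2 = v.2)
    {u v : α × β} (h₁ : u.1 ≠ v.1) (h₂ : u.2 ≠ v.2) : 1 < G.edist u v := by
  rw [← not_le, edist_le_one_iff_adj_or_eq]
  rintro (h | rfl)
  · exact (hG h).elim h₁ h₂
  · exact h₁ rfl

lemma isEvasionSet_square (hG : ∀ ⦃u v⦄, G.Adj u v → u.1 = v.1 ∨ u.2 = v.2) {x x' : α}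
    {c c' : β} (hrow : ∀ d ∈ ({c, c'} : Set β), G.Adj (x, d) (x', d))
    (hcol : ∀ y ∈ ({x, x'} : Set α), G.Adj (y, c) (y, c')) :
    G.IsEvasionSet ({x, x'} ×ˢ {c, c'}) := by
  rintro ⟨y, d⟩ ⟨hy, hd⟩ a ha
  dsimp only at hy hd
  obtain ⟨y', hy', hyy'⟩ : ∃ y' ∈ ({x, x'} : Set α), G.Adj (y, d) (y', d) := by
    rcases hy with rfl | rfl
    · exact ⟨x', by simp, hrow d hd⟩
    · exact ⟨x, by simp, (hrow d hd).symm⟩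
  obtain ⟨d', hd', hdd'⟩ : ∃ d' ∈ ({c, c'} : Set β), G.Adj (y, d) (y, d') := by
    rcases hd with rfl | rfl
    · exact ⟨c', by simp, hcol y hy⟩
    · exact ⟨c, by simp, (hcol y hy).symm⟩
  have hne : a ≠ (y, d) := G.ne_of_adj ha
  rcases hG ha with h | h
  · refine ⟨(y', d), ⟨hy', hd⟩, hyy', one_lt_edist_of_ne_of_ne hG ?_ ?_⟩
    · rw [h]
      exact fun e => G.ne_of_adj hyy' (Prod.ext e rfl)
    · exact fun e => hne (Prod.ext h e)
  · refine ⟨(y, d'), ⟨hy, hd'⟩, hdd', one_lt_edist_of_ne_of_ne hG ?_ ?_⟩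
    · exact fun e => hne (Prod.ext e h)
    · rw [h]
      exact fun e => G.ne_of_adj hdd' (Prod.ext rfl e)

lemma exists_mem_square_one_lt_edist (hG : ∀ ⦃u v⦄, G.Adj u v → u.1 = v.1 ∨ u.2 = v.2)
    {x x' : α} {c c' : β} (hx : x ≠ x') (hc : c ≠ c') (a : α × β) :
    ∃ r ∈ ({x, x'} ×ˢ {c, c'} : Set (α × β)), 1 < G.edist a r := by
  obtain ⟨y, hy, hya⟩ := (Set.nontrivial_pair hx).exists_ne a.1
  obtain ⟨d, hd, hda⟩ := (Set.nontrivial_pair hc).exists_ne a.2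
  exact ⟨(y, d), ⟨hy, hd⟩, one_lt_edist_of_ne_of_ne hG hya.symm hda.symm⟩

end Square

section SemiTorus

variable {m n : ℕ}

def CycAdj (n a b : ℕ) : Prop := Nat.dist a b = 1 ∨ (a = 0 ∧ b = n - 1) ∨ (b = 0 ∧ a = n - 1)

/-- Distance on the cycle `0, 1, …, n - 1`; meaningful only for `a, b < n`. -/
def cycDist (n a b : ℕ) : ℕ := min (Nat.dist a b) (n - Nat.dist a b)

lemma semiTorus_adj_cases {u v : Fin m × Fin n} (h : (semiTorus m n).Adj u v) :
    (u.1 = v.1 ∧ CycAdj n u.2 v.2) ∨ (u.2 = v.2 ∧ Nat.dist u.1 v.1 = 1) := by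
  obtain ⟨-, h⟩ := (SimpleGraph.fromRel_adj _ _ _).1 h
  rw [Nat.dist_comm v.1, Nat.dist_comm v.2] at h
  have hsum (hs : Nat.dist u.1 v.1 + Nat.dist u.2 v.2 = 1) :
      (u.1 = v.1 ∧ CycAdj n u.2 v.2) ∨ (u.2 = v.2 ∧ Nat.dist u.1 v.1 = 1) := by
    rcases Nat.eq_zero_or_pos (Nat.dist u.1 v.1) with h0 | h0
    · exact Or.inl ⟨Fin.ext (Nat.eq_of_dist_eq_zero h0), Or.inl (by omega)⟩
    · exact Or.inr ⟨Fin.ext (Nat.eq_of_dist_eq_zero (by omega)), by omega⟩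
  rcases h with (h | ⟨h₁, h₂, h₃⟩) | (h | ⟨h₁, h₂, h₃⟩)
  · exact hsum h
  · exact Or.inl ⟨h₁, Or.inr (Or.inl ⟨h₂, h₃⟩)⟩
  · exact hsum h
  · exact Or.inl ⟨h₁.symm, Or.inr (Or.inr ⟨h₂, h₃⟩)⟩

lemma semiTorus_adj_fst_eq_or_snd_eq ⦃u v : Fin m × Fin n⦄ (h : (semiTorus m n).Adj u v) :
    u.1 = v.1 ∨ u.2 = v.2 :=
  (semiTorus_adj_cases h).imp And.left And.left

lemma semiTorus_adj_of_dist_eq_one (d : Fin n) {x x' : Fin m} (h : Nat.dist x x' = 1) :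
    (semiTorus m n).Adj (x, d) (x', d) := by
  refine (SimpleGraph.fromRel_adj _ _ _).2 ⟨fun e => ?_, Or.inl (Or.inl (by simpa using h))⟩
  rw [Prod.mk.injEq] at e
  rw [e.1, Nat.dist_self] at h
  exact zero_ne_one h

lemma semiTorus_adj_of_cycAdj (hn : 2 ≤ n) (y : Fin m) {c c' : Fin n} (h : CycAdj n c c') :
    (semiTorus m n).Adj (y, c) (y, c') := by
  have hne : (c : ℕ) ≠ c' := by
    unfold CycAdj Nat.dist at h
    omega
  refine (SimpleGraph.fromRel_adj _ _ _).2 ⟨fun e => hne (congrArg (fun w => (w.2 : ℕ)) e), ?_⟩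
  rcases h with h | h | h
  · exact Or.inl (Or.inl (by simpa using h))
  · exact Or.inl (Or.inr ⟨rfl, h⟩)
  · exact Or.inr (Or.inr ⟨rfl, h⟩)

lemma cycDist_le_cycDist_add_one {n q a b : ℕ} (hq : q < n) (ha : a < n) (hb : b < n)
    (h : CycAdj n a b) : cycDist n q b ≤ cycDist n q a + 1 := by
  unfold CycAdj cycDist Nat.dist at *
  omega

lemma semiTorus_taxicab_le_add_one (z : Fin m × Fin n) {u v : Fin m × Fin n}
    (h : (semiTorus m n).Adj u v) :
    Nat.dist z.1 v.1 + cycDist n z.2 v.2 ≤ Nat.dist z.1 u.1 + cycDist n z.2 u.2 + 1 := by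
  rcases semiTorus_adj_cases h with ⟨h₁, h₂⟩ | ⟨h₁, h₂⟩
  · have := cycDist_le_cycDist_add_one z.2.isLt u.2.isLt v.2.isLt h₂
    rw [h₁]
    omega
  · have := Nat.dist.triangle_inequality z.1 u.1 v.1
    rw [h₁]
    omega

lemma taxicab_le_edist_semiTorus (u v : Fin m × Fin n) :
    ((Nat.dist u.1 v.1 + cycDist n u.2 v.2 : ℕ) : ℕ∞) ≤ (semiTorus m n).edist u v := by
  have := (semiTorus m n).apply_le_apply_add_edist
    (f := fun w => Nat.dist u.1 w.1 + cycDist n u.2 w.2)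
    (fun _ _ h => semiTorus_taxicab_le_add_one u h) u v
  simpa [Nat.dist_self, cycDist] using this

lemma exists_far_rows (hm : 2 ≤ m) (p : Fin m) :
    ∃ x x' : Fin m, Nat.dist x x' = 1 ∧
      ∀ y ∈ ({x, x'} : Set (Fin m)), m / 2 - 1 ≤ Nat.dist p y := by
  have hp := p.isLt
  by_cases h : m ≤ 2 * p + 1
  · refine ⟨⟨0, by omega⟩, ⟨1, by omega⟩, rfl, ?_⟩
    rintro y (rfl | rfl) <;> simp only [Nat.dist] <;> omega
  · refine ⟨⟨m - 2, by omega⟩, ⟨m - 1, by omega⟩, by simp only [Nat.dist]; omega, ?_⟩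
    rintro y (rfl | rfl) <;> simp only [Nat.dist] <;> omega

lemma exists_far_cols (hn : 2 ≤ n) (q : Fin n) :
    ∃ c c' : Fin n, CycAdj n c c' ∧
      ∀ d ∈ ({c, c'} : Set (Fin n)), n / 2 - 1 ≤ cycDist n q d := by
  have hq := q.isLt
  by_cases h₁ : q + n / 2 + 1 < n
  · refine ⟨⟨q + n / 2, by omega⟩, ⟨q + n / 2 + 1, by omega⟩, ?_, ?_⟩
    · left; simp only [Nat.dist]; omega
    · rintro d (rfl | rfl) <;> simp only [cycDist, Nat.dist] <;> omega
  by_cases h₂ : q + n / 2 + 1 = n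
  · refine ⟨⟨n - 1, by omega⟩, ⟨0, by omega⟩, Or.inr (Or.inr ⟨rfl, rfl⟩), ?_⟩
    rintro d (rfl | rfl) <;> simp only [cycDist, Nat.dist] <;> omega
  · refine ⟨⟨q + n / 2 - n, by omega⟩, ⟨q + n / 2 + 1 - n, by omega⟩, ?_, ?_⟩
    · left; simp only [Nat.dist]; omega
    · rintro d (rfl | rfl) <;> simp only [cycDist, Nat.dist] <;> omega

end SemiTorus

/-- On the semi-torus S_{m,n} (m ≥ 3, n ≥ 4), against every strategy of
two cops the robber can force the capture time to be at least ⌊n/2⌋ + ⌊m/2⌋ - 2. -/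
theorem stmt_10 (m n : ℕ) (hm : 3 ≤ m) (hn : 4 ≤ n)
    (cs : CopStrategy (semiTorus m n) 2) :
    ∃ rs : RobberStrategy (semiTorus m n) 2,
      ∀ t : ℕ, CapturedBy cs rs t → n / 2 + m / 2 - 2 ≤ t := by
  obtain ⟨x, x', hx, hxfar⟩ := exists_far_rows (by omega) (cs.init 0).1
  obtain ⟨c, c', hc, hcfar⟩ := exists_far_cols (by omega) (cs.init 0).2
  have hrow (d : Fin n) : (semiTorus m n).Adj (x, d) (x', d) := semiTorus_adj_of_dist_eq_one d hx
  have hcol (y : Fin m) : (semiTorus m n).Adj (y, c) (y, c') :=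
    semiTorus_adj_of_cycAdj (by omega) y hc
  have hL := isEvasionSet_square semiTorus_adj_fst_eq_or_snd_eq (fun d _ => hrow d)
    (fun y _ => hcol y)
  obtain ⟨r₀, hr₀, h₀⟩ := exists_mem_square_one_lt_edist semiTorus_adj_fst_eq_or_snd_eq
    (fun e => (hrow c).ne (Prod.ext e rfl)) (fun e => (hcol x).ne (Prod.ext rfl e)) (cs.init 1)
  refine ⟨evasionStrategy _ _ 1 r₀, fun t hcap => hcap.le_of_evasionStrategy hL hr₀ h₀ ?_⟩
  intro j hj v hv
  obtain rfl : j = 0 := by omega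
  refine le_trans ?_ (taxicab_le_edist_semiTorus _ v)
  have := hxfar v.1 hv.1
  have := hcfar v.2 hv.2
  exact_mod_cast (by omega)
end

section
/- For every vertex u of the semi-torus S_{m,n} with m ≥ 3 and n ≥ 4, there exists a vertex w of S_{m,n} whose graph distance from u is at least ⌊n/2⌋ + ⌊m/2⌋. -/
/-! The semi-torus is the box product of the path `P_m` and the cycle `C_n`, and graph distances
add up in box products. In each factor some vertex lies at distance at least half the order from
any given vertex; these lower bounds come from the potentials `x ↦ |x - b|` on the path and the cyclic
distance to `b` on the cycle, which change by at most one along an edge. -/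

namespace SimpleGraph

variable {V W : Type*} {G : SimpleGraph V} {H : SimpleGraph W}

lemma Reachable.le_add_dist {f : V → ℕ} (hf : ∀ a b, G.Adj a b → f a ≤ f b + 1) {u v : V}
    (h : G.Reachable u v) : f u ≤ f v + G.dist u v := by
  obtain ⟨p, hp⟩ := h.exists_walk_length_eq_dist
  rw [← hp]
  clear hp h
  induction p with
  | nil => simp
  | cons hadj _ ih =>
    have := hf _ _ hadj
    rw [Walk.length_cons]
    omega

lemma dist_boxProd {x y : V × W} (h₁ : G.Reachable x.1 y.1) (h₂ : H.Reachable x.2 y.2) :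
    (G □ H).dist x y = G.dist x.1 y.1 + H.dist x.2 y.2 := by
  rw [dist, edist_boxProd, ENat.toNat_add (edist_ne_top_iff_reachable.2 h₁)
    (edist_ne_top_iff_reachable.2 h₂)]
  rfl

lemma dist_le_dist_pathGraph {n : ℕ} (a b : Fin n) : Nat.dist a b ≤ (pathGraph n).dist a b := by
  have key := (pathGraph_preconnected n a b).le_add_dist (f := fun x : Fin n => Nat.dist x b) ?_
  · simpa [Nat.dist_self] using key
  intro x y h
  rw [pathGraph_adj] at h
  simp only [Nat.dist]
  omega

lemma exists_half_le_dist_pathGraph {n : ℕ} (a : Fin n) :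
    ∃ b, n / 2 ≤ (pathGraph n).dist a b := by
  have := a.isLt
  by_cases h : n ≤ 2 * a
  · refine ⟨⟨0, by omega⟩, le_trans ?_ (dist_le_dist_pathGraph _ _)⟩
    simp only [Nat.dist]
    omega
  · refine ⟨⟨n - 1, by omega⟩, le_trans ?_ (dist_le_dist_pathGraph _ _)⟩
    simp only [Nat.dist]
    omega

lemma min_dist_le_dist_cycleGraph {n : ℕ} (a b : Fin n) :
    min (Nat.dist a b) (n - Nat.dist a b) ≤ (cycleGraph n).dist a b := by
  have key := (cycleGraph_preconnected a b).le_add_dist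
    (f := fun x : Fin n => min (Nat.dist x b) (n - Nat.dist x b)) ?_
  · simpa [Nat.dist_self] using key
  intro x y h
  rw [cycleGraph_adj'] at h
  have := x.isLt
  have := b.isLt
  simp only [Nat.dist]
  rcases lt_trichotomy x y with hxy | rfl | hxy
  · rw [Fin.coe_sub_iff_lt.2 hxy, Fin.coe_sub_iff_le.2 hxy.le] at h
    omega
  · omega
  · rw [Fin.coe_sub_iff_lt.2 hxy, Fin.coe_sub_iff_le.2 hxy.le] at h
    omega

lemma exists_half_le_dist_cycleGraph {n : ℕ} (a : Fin n) :
    ∃ b, n / 2 ≤ (cycleGraph n).dist a b := by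
  by_cases h : a + n / 2 < n
  · refine ⟨⟨a + n / 2, h⟩, le_trans ?_ (min_dist_le_dist_cycleGraph _ _)⟩
    simp only [Nat.dist]
    omega
  · refine ⟨⟨a + n / 2 - n, by omega⟩, le_trans ?_ (min_dist_le_dist_cycleGraph _ _)⟩
    simp only [Nat.dist]
    omega

end SimpleGraph

open SimpleGraph

lemma semiTorus_eq_boxProd (m n : ℕ) : semiTorus m n = pathGraph m □ cycleGraph n := by
  ext ⟨a, b⟩ ⟨c, d⟩
  simp only [semiTorus, fromRel_adj, boxProd_adj, pathGraph_adj, cycleGraph_adj', ne_eq,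
    Prod.mk.injEq, Fin.ext_iff, Nat.dist]
  have := b.isLt
  rcases lt_trichotomy b d with h | rfl | h
  · rw [Fin.coe_sub_iff_lt.2 h, Fin.coe_sub_iff_le.2 h.le]
    omega
  · rw [Fin.coe_sub_iff_le.2 le_rfl]
    omega
  · rw [Fin.coe_sub_iff_lt.2 h, Fin.coe_sub_iff_le.2 h.le]
    omega

theorem stmt_11_general (m n : ℕ) (u : Fin m × Fin n) :
    ∃ w : Fin m × Fin n, n / 2 + m / 2 ≤ (semiTorus m n).dist u w := by
  obtain ⟨a, ha⟩ := exists_half_le_dist_pathGraph u.1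
  obtain ⟨b, hb⟩ := exists_half_le_dist_cycleGraph u.2
  refine ⟨(a, b), ?_⟩
  rw [semiTorus_eq_boxProd,
    dist_boxProd (pathGraph_preconnected m _ _) (cycleGraph_preconnected _ _)]
  exact (add_comm _ _).trans_le (add_le_add ha hb)

/-- For every vertex u of the semi-torus S_{m,n} (m ≥ 3, n ≥ 4) there is
a vertex w at graph distance at least ⌊n/2⌋ + ⌊m/2⌋ from u. -/
theorem stmt_11 (m n : ℕ) (hm : 3 ≤ m) (hn : 4 ≤ n) (u : Fin m × Fin n) :
    ∃ w : Fin m × Fin n, n / 2 + m / 2 ≤ (semiTorus m n).dist u w :=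
  stmt_11_general m n u
end
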